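/- The map b ↦ (ε_0(b), ε_1(b), …, ε_n(b)) restricts to a bijection from the set of minimal elements {b ∈ B^(l) : x_i = x̄_i for all 2 ≤ i ≤ n−1} onto the set {(a_0,…,a_n) ∈ ℕ^{n+1} : a_0 + a_1 + 2(a_2 + ⋯ + a_{n−2}) + a_{n−1} + a_n = l} of level-l dominant classical weights of D_n^(1). -/

import Mathlib

/-- An element candidate of the level-`l` perfect crystal of type `D_n^(1)`:
a pair of integer sequences `(x, x̄)`, whose relevant entries are indexed by `1, …, n`. -/
abbrev DElt : Type := (ℕ → ℤ) × (ℕ → ℤ)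

/-- All entries (indices `1, …, n`) are nonnegative; for the result of a Kashiwara
operator this expresses that the result "is not `0`". -/
def dvalid (n : ℕ) (p : DElt) : Prop :=
  ∀ i, 1 ≤ i → i ≤ n → 0 ≤ p.1 i ∧ 0 ≤ p.2 i

/-- Membership in the level-`l` perfect crystal `B^(l)` of type `D_n^(1)`:
all entries are nonnegative integers (we normalize the irrelevant indices to `0`),
`x_n = 0` or `x̄_n = 0`, and `Σ_{i=1}^n (x_i + x̄_i) = l`. -/
def dmem (n l : ℕ) (p : DElt) : Prop :=
  dvalid n p ∧
  (∀ i, i = 0 ∨ n < i → p.1 i = 0 ∧ p.2 i = 0) ∧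
  (p.1 n = 0 ∨ p.2 n = 0) ∧
  (∑ i ∈ Finset.Icc 1 n, (p.1 i + p.2 i)) = (l : ℤ)

/-- `(x)_+ = max(0, x)`. -/
def pPart (x : ℤ) : ℤ := max 0 x

/-- `φ_i(b)` for `b = (x | x̄)`:  `φ_0 = x̄_1 + (x̄_2 - x_2)_+`;
`φ_i = x_i + (x̄_{i+1} - x_{i+1})_+` for `1 ≤ i ≤ n-2`;
`φ_{n-1} = x_{n-1} + x̄_n`;  `φ_n = x_{n-1} + x_n`. -/
def dphi (n i : ℕ) (p : DElt) : ℤ :=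
  if i = 0 then p.2 1 + pPart (p.2 2 - p.1 2)
  else if i ≤ n - 2 then p.1 i + pPart (p.2 (i+1) - p.1 (i+1))
  else if i = n - 1 then p.1 (n-1) + p.2 n
  else p.1 (n-1) + p.1 n

/-- `ε_i(b)` for `b = (x | x̄)`:  `ε_0 = x_1 + (x_2 - x̄_2)_+`;
`ε_i = x̄_i + (x_{i+1} - x̄_{i+1})_+` for `1 ≤ i ≤ n-2`;
`ε_{n-1} = x̄_{n-1} + x_n`;  `ε_n = x̄_{n-1} + x̄_n`. -/
def deps (n i : ℕ) (p : DElt) : ℤ :=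
  if i = 0 then p.1 1 + pPart (p.1 2 - p.2 2)
  else if i ≤ n - 2 then p.2 i + pPart (p.1 (i+1) - p.2 (i+1))
  else if i = n - 1 then p.2 (n-1) + p.1 n
  else p.2 (n-1) + p.2 n

/-- The Kashiwara operator `f̃_i` of Theorem 2.2, as a total map on pairs of sequences;
"being `0`" is recorded by failure of `dvalid` for the result. -/
def ftilde (n i : ℕ) (p : DElt) : DElt :=
  if i = 0 then
    -- case `x_2 ≥ x̄_2` / case `x_2 < x̄_2`
    if p.2 2 ≤ p.1 2 then
      (Function.update p.1 2 (p.1 2 + 1), Function.update p.2 1 (p.2 1 - 1))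
    else
      (Function.update p.1 1 (p.1 1 + 1), Function.update p.2 2 (p.2 2 - 1))
  else if i ≤ n - 2 then
    -- case `x_{i+1} ≥ x̄_{i+1}` / case `x_{i+1} < x̄_{i+1}`
    if p.2 (i+1) ≤ p.1 (i+1) then
      (Function.update (Function.update p.1 i (p.1 i - 1)) (i+1) (p.1 (i+1) + 1), p.2)
    else
      (p.1, Function.update (Function.update p.2 (i+1) (p.2 (i+1) - 1)) i (p.2 i + 1))
  else if i = n - 1 then
    -- case `x̄_n = 0` / case `x_n = 0, x̄_n ≥ 1`
    if p.2 n = 0 then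
      (Function.update (Function.update p.1 (n-1) (p.1 (n-1) - 1)) n (p.1 n + 1), p.2)
    else
      (p.1, Function.update (Function.update p.2 n (p.2 n - 1)) (n-1) (p.2 (n-1) + 1))
  else
    -- `i = n`: case `x_n ≥ 1, x̄_n = 0` / case `x_n = 0`
    if 1 ≤ p.1 n ∧ p.2 n = 0 then
      (Function.update p.1 n (p.1 n - 1), Function.update p.2 (n-1) (p.2 (n-1) + 1))
    else
      (Function.update p.1 (n-1) (p.1 (n-1) - 1), Function.update p.2 n (p.2 n + 1))

/-- The Kashiwara operator `ẽ_i` of Theorem 2.2, as a total map on pairs of sequences;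
"being `0`" is recorded by failure of `dvalid` for the result. -/
def etilde (n i : ℕ) (p : DElt) : DElt :=
  if i = 0 then
    -- case `x_2 > x̄_2` / case `x_2 ≤ x̄_2`
    if p.2 2 < p.1 2 then
      (Function.update p.1 2 (p.1 2 - 1), Function.update p.2 1 (p.2 1 + 1))
    else
      (Function.update p.1 1 (p.1 1 - 1), Function.update p.2 2 (p.2 2 + 1))
  else if i ≤ n - 2 then
    -- case `x_{i+1} > x̄_{i+1}` / case `x_{i+1} ≤ x̄_{i+1}`
    if p.2 (i+1) < p.1 (i+1) then
      (Function.update (Function.update p.1 i (p.1 i + 1)) (i+1) (p.1 (i+1) - 1), p.2)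
    else
      (p.1, Function.update (Function.update p.2 (i+1) (p.2 (i+1) + 1)) i (p.2 i - 1))
  else if i = n - 1 then
    -- case `x_n ≥ 1, x̄_n = 0` / case `x_n = 0`
    if 1 ≤ p.1 n ∧ p.2 n = 0 then
      (Function.update (Function.update p.1 (n-1) (p.1 (n-1) + 1)) n (p.1 n - 1), p.2)
    else
      (p.1, Function.update (Function.update p.2 n (p.2 n + 1)) (n-1) (p.2 (n-1) - 1))
  else
    -- `i = n`: case `x̄_n = 0` / case `x_n = 0, x̄_n ≥ 1`
    if p.2 n = 0 then
      (Function.update p.1 n (p.1 n + 1), Function.update p.2 (n-1) (p.2 (n-1) - 1))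
    else
      (Function.update p.1 (n-1) (p.1 (n-1) + 1), Function.update p.2 n (p.2 n - 1))

/-!
For a minimal element every middle coordinate satisfies `x_i = x̄_i`, so all the
`(x_{i+1} - x̄_{i+1})_+` terms vanish and `ε` reads off `x_1`, `x̄_1, …, x̄_{n-2}`,
`x̄_{n-1} + x_n` and `x̄_{n-1} + x̄_n`. Since `x_n x̄_n = 0`, the common value
`x_{n-1} = x̄_{n-1}` is recovered as `min(ε_{n-1}, ε_n)`, which gives an explicit inverse; the
level `l = Σ (x_i + x̄_i)` counts each middle `x̄_i` twice, matching the level of a weight.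
-/

def IsMinimal (n : ℕ) (p : DElt) : Prop :=
  ∀ i, 2 ≤ i → i ≤ n - 1 → p.1 i = p.2 i

def minimalElts (n l : ℕ) : Set DElt :=
  {p | dmem n l p ∧ IsMinimal n p}

def dominantWeights (n l : ℕ) : Set (ℕ → ℤ) :=
  {a | (∀ i, i ≤ n → 0 ≤ a i) ∧ (∀ i, n < i → a i = 0) ∧
    a 0 + a 1 + 2 * (∑ i ∈ Finset.Icc 2 (n-2), a i) + a (n-1) + a n = (l : ℤ)}

def epsVec (n : ℕ) (p : DElt) : ℕ → ℤ :=
  fun i => if i ≤ n then deps n i p else 0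

/-- `x_i = x̄_i = a_i` for `2 ≤ i ≤ n-2`, `x_{n-1} = x̄_{n-1} = s`, `x_1 = a_0`, `x̄_1 = a_1`,
`x_n = a_{n-1} - s`, `x̄_n = a_n - s`, where `s = min(a_{n-1}, a_n)`. -/
def minimalOfWeight (n : ℕ) (a : ℕ → ℤ) : DElt :=
  let s := min (a (n-1)) (a n)
  let mid : ℕ → ℤ := fun i => if 2 ≤ i ∧ i ≤ n - 2 then a i else if i = n - 1 then s else 0
  (Function.update (Function.update mid 1 (a 0)) n (a (n-1) - s),
   Function.update (Function.update mid 1 (a 1)) n (a n - s))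

lemma sum_Icc_one_split {n : ℕ} (hn : 3 ≤ n) (f : ℕ → ℤ) :
    ∑ i ∈ Finset.Icc 1 n, f i = f 1 + ∑ i ∈ Finset.Icc 2 (n-2), f i + f (n-1) + f n := by
  have h : Finset.Icc 1 n = insert 1 (insert (n-1) (insert n (Finset.Icc 2 (n-2)))) := by
    ext x
    simp only [Finset.mem_Icc, Finset.mem_insert]
    omega
  rw [h, Finset.sum_insert (by simp only [Finset.mem_insert, Finset.mem_Icc]; omega),
    Finset.sum_insert (by simp only [Finset.mem_insert, Finset.mem_Icc]; omega),
    Finset.sum_insert (by simp only [Finset.mem_Icc]; omega)]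
  ring

section deps

variable {n : ℕ} {p : DElt}

lemma pPart_nonneg (x : ℤ) : 0 ≤ pPart x := le_max_left 0 x

lemma deps_zero_of_eq (h : p.1 2 = p.2 2) : deps n 0 p = p.1 1 := by
  simp [deps, h, pPart]

lemma deps_of_eq {i : ℕ} (hi : 1 ≤ i) (hin : i ≤ n - 2) (h : p.1 (i+1) = p.2 (i+1)) :
    deps n i p = p.2 i := by
  rw [deps, if_neg (by omega), if_pos hin, h]
  simp [pPart]

lemma deps_sub_one (hn : 2 ≤ n) : deps n (n-1) p = p.2 (n-1) + p.1 n := by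
  rw [deps, if_neg (by omega), if_neg (by omega), if_pos rfl]

lemma deps_self (hn : 1 ≤ n) : deps n n p = p.2 (n-1) + p.2 n := by
  rw [deps, if_neg (by omega), if_neg (by omega), if_neg (by omega)]

lemma deps_nonneg (hp : dvalid n p) (hn : 2 ≤ n) {i : ℕ} (hi : i ≤ n) : 0 ≤ deps n i p := by
  have h1 := hp 1 le_rfl (by omega)
  have hn1 := hp (n-1) (by omega) (by omega)
  have hnn := hp n (by omega) le_rfl
  unfold deps
  split_ifs with h0 hmid
  · linarith [pPart_nonneg (p.1 2 - p.2 2)]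
  · linarith [pPart_nonneg (p.1 (i+1) - p.2 (i+1)), (hp i (by omega) (by omega)).2]
  · linarith
  · linarith

lemma min_deps_sub_one_deps_self (hn : 2 ≤ n) (hp : dvalid n p) (hor : p.1 n = 0 ∨ p.2 n = 0) :
    min (deps n (n-1) p) (deps n n p) = p.2 (n-1) := by
  have hnn := hp n (by omega) le_rfl
  rw [deps_sub_one hn, deps_self (by omega)]
  rcases hor with h | h <;> simp [h, hnn.1, hnn.2]

end deps

section minimal

variable {n : ℕ} {p q : DElt}

lemma IsMinimal.sum_Icc (hn : 3 ≤ n) (hp : IsMinimal n p) :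
    ∑ i ∈ Finset.Icc 1 n, (p.1 i + p.2 i) = p.1 1 + p.2 1 +
      2 * ∑ i ∈ Finset.Icc 2 (n-2), p.2 i + 2 * p.2 (n-1) + p.1 n + p.2 n := by
  have hmid : ∑ i ∈ Finset.Icc 2 (n-2), (p.1 i + p.2 i) = 2 * ∑ i ∈ Finset.Icc 2 (n-2), p.2 i := by
    rw [Finset.mul_sum]
    refine Finset.sum_congr rfl fun i hi => ?_
    rw [Finset.mem_Icc] at hi
    rw [hp i hi.1 (by omega)]
    ring
  rw [sum_Icc_one_split hn, hmid, hp (n-1) (by omega) le_rfl]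
  ring

lemma IsMinimal.deps_eq (hn : 3 ≤ n) (hp : IsMinimal n p) {i : ℕ} (hi : 1 ≤ i) (hin : i ≤ n - 2) :
    deps n i p = p.2 i :=
  deps_of_eq hi hin (hp (i+1) (by omega) (by omega))

lemma IsMinimal.ext (hp : IsMinimal n p) (hq : IsMinimal n q)
    (hp0 : ∀ i, i = 0 ∨ n < i → p.1 i = 0 ∧ p.2 i = 0)
    (hq0 : ∀ i, i = 0 ∨ n < i → q.1 i = 0 ∧ q.2 i = 0)
    (h1 : p.1 1 = q.1 1) (hn : p.1 n = q.1 n) (h2 : ∀ i, 1 ≤ i → i ≤ n → p.2 i = q.2 i) :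
    p = q := by
  refine Prod.ext (funext fun i => ?_) (funext fun i => ?_)
  · by_cases hout : i = 0 ∨ n < i
    · rw [(hp0 i hout).1, (hq0 i hout).1]
    by_cases hi1 : i = 1
    · rw [hi1, h1]
    by_cases hin : i = n
    · rw [hin, hn]
    rw [hp i (by omega) (by omega), hq i (by omega) (by omega), h2 i (by omega) (by omega)]
  · by_cases hout : i = 0 ∨ n < i
    · rw [(hp0 i hout).2, (hq0 i hout).2]
    exact h2 i (by omega) (by omega)

end minimal

section minimalOfWeight

variable {n : ℕ} (a : ℕ → ℤ)

lemma minimalOfWeight_one (hn : 3 ≤ n) :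
    (minimalOfWeight n a).1 1 = a 0 ∧ (minimalOfWeight n a).2 1 = a 1 := by
  simp [minimalOfWeight, show (1 : ℕ) ≠ n by omega]

lemma minimalOfWeight_mid {i : ℕ} (hi : 2 ≤ i) (hin : i ≤ n - 2) :
    (minimalOfWeight n a).1 i = a i ∧ (minimalOfWeight n a).2 i = a i := by
  simp [minimalOfWeight, show i ≠ n by omega, show i ≠ 1 by omega, hi, hin]

lemma minimalOfWeight_sub_one (hn : 3 ≤ n) :
    (minimalOfWeight n a).1 (n-1) = min (a (n-1)) (a n) ∧
      (minimalOfWeight n a).2 (n-1) = min (a (n-1)) (a n) := by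
  simp [minimalOfWeight, show n - 1 ≠ n by omega,
    show n - 1 ≠ 1 by omega, show ¬ n - 1 ≤ n - 2 by omega]

lemma minimalOfWeight_self :
    (minimalOfWeight n a).1 n = a (n-1) - min (a (n-1)) (a n) ∧
      (minimalOfWeight n a).2 n = a n - min (a (n-1)) (a n) := by
  simp [minimalOfWeight]

lemma minimalOfWeight_of_out (hn : 2 ≤ n) {i : ℕ} (hi : i = 0 ∨ n < i) :
    (minimalOfWeight n a).1 i = 0 ∧ (minimalOfWeight n a).2 i = 0 := by
  simp [minimalOfWeight, show i ≠ n by omega, show i ≠ 1 by omega, show i ≠ n - 1 by omega,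
    show ¬ (2 ≤ i ∧ i ≤ n - 2) by omega]

lemma isMinimal_minimalOfWeight : IsMinimal n (minimalOfWeight n a) := by
  intro i hi hin
  simp [minimalOfWeight, show i ≠ n by omega, show i ≠ 1 by omega]

end minimalOfWeight

section bijection

variable {n l : ℕ}

lemma mapsTo_epsVec (hn : 3 ≤ n) :
    Set.MapsTo (epsVec n) (minimalElts n l) (dominantWeights n l) := by
  rintro p ⟨⟨hval, -, hor, hsum⟩, hmin⟩
  refine ⟨fun i hi => ?_, fun i hi => if_neg (by omega), ?_⟩
  · simp only [epsVec, if_pos hi]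
    exact deps_nonneg hval (by omega) hi
  · have hmid : ∑ i ∈ Finset.Icc 2 (n-2), epsVec n p i = ∑ i ∈ Finset.Icc 2 (n-2), p.2 i := by
      refine Finset.sum_congr rfl fun i hi => ?_
      rw [Finset.mem_Icc] at hi
      rw [epsVec, if_pos (by omega), hmin.deps_eq hn (by omega) hi.2]
    rw [hmid]
    simp only [epsVec, if_pos (show 0 ≤ n by omega), if_pos (show 1 ≤ n by omega),
      if_pos (show n - 1 ≤ n by omega), if_pos le_rfl,
      deps_zero_of_eq (hmin 2 le_rfl (by omega)), hmin.deps_eq hn le_rfl (by omega),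
      deps_sub_one (show 2 ≤ n by omega), deps_self (show 1 ≤ n by omega)]
    rw [hmin.sum_Icc hn] at hsum
    linarith

lemma mapsTo_minimalOfWeight (hn : 3 ≤ n) :
    Set.MapsTo (minimalOfWeight n) (dominantWeights n l) (minimalElts n l) := by
  rintro a ⟨hnonneg, -, hlevel⟩
  have hs : 0 ≤ min (a (n-1)) (a n) := le_min (hnonneg _ (by omega)) (hnonneg _ le_rfl)
  obtain ⟨hx1, hy1⟩ := minimalOfWeight_one a hn
  obtain ⟨hxn1, hyn1⟩ := minimalOfWeight_sub_one a hn
  obtain ⟨hxn, hyn⟩ := minimalOfWeight_self (n := n) a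
  have hmin := isMinimal_minimalOfWeight (n := n) a
  refine ⟨⟨fun i hi hin => ?_, fun i hi => minimalOfWeight_of_out a (by omega) hi, ?_, ?_⟩, hmin⟩
  · by_cases h1 : i = 1
    · subst h1
      rw [hx1, hy1]
      exact ⟨hnonneg 0 (by omega), hnonneg 1 (by omega)⟩
    by_cases hmid : i ≤ n - 2
    · obtain ⟨hx, hy⟩ := minimalOfWeight_mid a (by omega) hmid
      rw [hx, hy]
      exact ⟨hnonneg i hin, hnonneg i hin⟩
    by_cases hn1 : i = n - 1
    · rw [hn1, hxn1, hyn1]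
      exact ⟨hs, hs⟩
    · rw [show i = n by omega, hxn, hyn]
      constructor <;> linarith [min_le_left (a (n-1)) (a n), min_le_right (a (n-1)) (a n)]
  · rw [hxn, hyn]
    rcases min_choice (a (n-1)) (a n) with h | h <;> rw [h] <;> simp
  · have hmid :
        ∑ i ∈ Finset.Icc 2 (n-2), (minimalOfWeight n a).2 i = ∑ i ∈ Finset.Icc 2 (n-2), a i :=
      Finset.sum_congr rfl fun i hi =>
        (minimalOfWeight_mid a (Finset.mem_Icc.1 hi).1 (Finset.mem_Icc.1 hi).2).2
    rw [hmin.sum_Icc hn, hmid, hx1, hy1, hyn1, hxn, hyn]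
    linarith

lemma epsVec_minimalOfWeight (hn : 3 ≤ n) {a : ℕ → ℤ} (ha : a ∈ dominantWeights n l) :
    epsVec n (minimalOfWeight n a) = a := by
  have hmin := isMinimal_minimalOfWeight (n := n) a
  funext i
  by_cases hi : i ≤ n
  swap
  · rw [epsVec, if_neg hi, ha.2.1 i (by omega)]
  rw [epsVec, if_pos hi]
  by_cases h0 : i = 0
  · rw [h0, deps_zero_of_eq (hmin 2 le_rfl (by omega)), (minimalOfWeight_one a hn).1]
  by_cases hmid : i ≤ n - 2
  · rw [hmin.deps_eq hn (by omega) hmid]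
    by_cases h1 : i = 1
    · rw [h1, (minimalOfWeight_one a hn).2]
    · exact (minimalOfWeight_mid a (by omega) hmid).2
  by_cases hn1 : i = n - 1
  · rw [hn1, deps_sub_one (by omega), (minimalOfWeight_sub_one a hn).2,
      (minimalOfWeight_self a).1]
    ring
  · rw [show i = n by omega, deps_self (by omega), (minimalOfWeight_sub_one a hn).2,
      (minimalOfWeight_self a).2]
    ring

lemma minimalOfWeight_epsVec (hn : 3 ≤ n) {p : DElt} (hp : p ∈ minimalElts n l) :
    minimalOfWeight n (epsVec n p) = p := by
  obtain ⟨⟨hval, hout, hor, -⟩, hmin⟩ := hp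
  have hs : min (epsVec n p (n-1)) (epsVec n p n) = p.2 (n-1) := by
    simp only [epsVec, if_pos (show n - 1 ≤ n by omega), if_pos le_rfl]
    exact min_deps_sub_one_deps_self (by omega) hval hor
  have hεn1 : epsVec n p (n-1) = p.2 (n-1) + p.1 n := by
    rw [epsVec, if_pos (by omega), deps_sub_one (by omega)]
  have hεn : epsVec n p n = p.2 (n-1) + p.2 n := by
    rw [epsVec, if_pos le_rfl, deps_self (by omega)]
  refine (isMinimal_minimalOfWeight _).ext hmin
    (fun i hi => minimalOfWeight_of_out _ (by omega) hi) hout ?_ ?_ fun i hi hin => ?_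
  · rw [(minimalOfWeight_one _ hn).1, epsVec, if_pos (by omega),
      deps_zero_of_eq (hmin 2 le_rfl (by omega))]
  · rw [(minimalOfWeight_self _).1, hs, hεn1]
    ring
  by_cases hmid : i ≤ n - 2
  · have hε : epsVec n p i = p.2 i := by
      rw [epsVec, if_pos hin, hmin.deps_eq hn hi hmid]
    by_cases h1 : i = 1
    · rw [h1, (minimalOfWeight_one _ hn).2, ← h1, hε]
    · rw [(minimalOfWeight_mid _ (by omega) hmid).2, hε]
  by_cases hn1 : i = n - 1
  · rw [hn1, (minimalOfWeight_sub_one _ hn).2, hs]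
  · rw [show i = n by omega, (minimalOfWeight_self _).2, hs, hεn]
    ring

theorem bijOn_epsVec_minimalElts (hn : 3 ≤ n) :
    Set.BijOn (epsVec n) (minimalElts n l) (dominantWeights n l) :=
  Set.InvOn.bijOn
    ⟨fun _ hp => minimalOfWeight_epsVec hn hp, fun _ ha => epsVec_minimalOfWeight hn ha⟩
    (mapsTo_epsVec hn) (mapsTo_minimalOfWeight hn)

end bijection

theorem stmt14_general (n l : ℕ) (hn : 4 ≤ n) :
    Set.BijOn (fun p : DElt => fun i : ℕ => if i ≤ n then deps n i p else 0)
      {p : DElt | dmem n l p ∧ ∀ i, 2 ≤ i → i ≤ n - 1 → p.1 i = p.2 i}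
      {a : ℕ → ℤ | (∀ i, i ≤ n → 0 ≤ a i) ∧ (∀ i, n < i → a i = 0) ∧
        a 0 + a 1 + 2 * (∑ i ∈ Finset.Icc 2 (n-2), a i) + a (n-1) + a n = (l : ℤ)} :=
  bijOn_epsVec_minimalElts (by omega)

/-- `b ↦ (ε_0(b), …, ε_n(b))` is a bijection from the set of minimal
elements `{b ∈ B^(l) : x_i = x̄_i for 2 ≤ i ≤ n-1}` onto the set of level-`l` dominant
classical weights `{(a_0,…,a_n) ∈ ℕ^{n+1} : a_0 + a_1 + 2(a_2 + ⋯ + a_{n-2}) + a_{n-1} + a_n = l}`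
(tuples are encoded as integer sequences vanishing beyond index `n`). -/
theorem stmt14 (n l : ℕ) (hn : 4 ≤ n) (hl : 1 ≤ l) :
    Set.BijOn (fun p : DElt => fun i : ℕ => if i ≤ n then deps n i p else 0)
      {p : DElt | dmem n l p ∧ ∀ i, 2 ≤ i → i ≤ n - 1 → p.1 i = p.2 i}
      {a : ℕ → ℤ | (∀ i, i ≤ n → 0 ≤ a i) ∧ (∀ i, n < i → a i = 0) ∧
        a 0 + a 1 + 2 * (∑ i ∈ Finset.Icc 2 (n-2), a i) + a (n-1) + a n = (l : ℤ)} :=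
  stmt14_general n l hn
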